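/- arXiv:2310.06550 — 4 statements merged into one kernel-verified Lean document; each statement's English description precedes it below -/
import Mathlib

section
/- For every n ≥ 1 and every permutation σ in the symmetric group Σ_n, the order of σ is strictly less than e^{n/e}; i.e., (orderOf σ : ℝ) < exp(n / e), where e = exp(1). -/
/-!
The order of `σ` is the lcm of its cycle lengths, hence at most the product of the parts of the
partition of `n` formed by the cycle lengths and the fixed points. Putting `y = x / e - 1` in
`y + 1 ≤ e ^ y` gives `x ≤ e ^ (x / e)`, with equality only at `x = e`; as `e` is not an integer,
a nonempty product of natural numbers with sum `n` is strictly below `e ^ (n / e)`.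
-/

open Real

theorem Real.le_exp_div_exp_one (x : ℝ) : x ≤ exp (x / exp 1) := by
  have h := add_one_le_exp (x / exp 1 - 1)
  rw [sub_add_cancel, exp_sub, le_div_iff₀ (exp_pos 1), div_mul_cancel₀ x (exp_pos 1).ne'] at h
  exact h

theorem Real.lt_exp_div_exp_one {x : ℝ} (hx : x ≠ exp 1) : x < exp (x / exp 1) := by
  have hx' : x / exp 1 - 1 ≠ 0 := by
    rwa [sub_ne_zero, ne_eq, div_eq_one_iff_eq (exp_pos 1).ne']
  have h := add_one_lt_exp hx'
  rw [sub_add_cancel, exp_sub, lt_div_iff₀ (exp_pos 1), div_mul_cancel₀ x (exp_pos 1).ne'] at h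
  exact h

theorem Nat.cast_ne_exp_one (k : ℕ) : (k : ℝ) ≠ exp 1 := by
  rcases Nat.lt_or_ge k 3 with hk | hk
  · have : (k : ℝ) ≤ 2 := by exact_mod_cast Nat.le_of_lt_succ hk
    exact (this.trans_lt exp_one_gt_two).ne
  · have : (3 : ℝ) ≤ k := by exact_mod_cast hk
    exact (exp_one_lt_three.trans_le this).ne'

theorem Multiset.natCast_prod_le_exp_sum_div_exp_one (s : Multiset ℕ) :
    (s.prod : ℝ) ≤ exp (s.sum / exp 1) := by
  induction s using Multiset.induction_on with
  | empty => simp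
  | cons a s ih =>
    simp only [Multiset.prod_cons, Multiset.sum_cons, Nat.cast_mul, Nat.cast_add, add_div, exp_add]
    exact mul_le_mul (le_exp_div_exp_one a) ih (by positivity) (exp_pos _).le

theorem Multiset.natCast_prod_lt_exp_sum_div_exp_one {s : Multiset ℕ} (hs : s ≠ 0) :
    (s.prod : ℝ) < exp (s.sum / exp 1) := by
  obtain ⟨a, ha⟩ := Multiset.exists_mem_of_ne_zero hs
  obtain ⟨s, rfl⟩ := Multiset.exists_cons_of_mem ha
  simp only [Multiset.prod_cons, Multiset.sum_cons, Nat.cast_mul, Nat.cast_add, add_div, exp_add]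
  exact mul_lt_mul_of_lt_of_le_of_nonneg_of_pos (lt_exp_div_exp_one (Nat.cast_ne_exp_one a))
    (natCast_prod_le_exp_sum_div_exp_one s) (by positivity) (exp_pos _)

theorem Equiv.Perm.orderOf_le_prod_parts_partition {α : Type*} [Fintype α] [DecidableEq α]
    (σ : Equiv.Perm α) : orderOf σ ≤ σ.partition.parts.prod := by
  have hdvd : orderOf σ ∣ σ.partition.parts.prod := by
    rw [← lcm_cycleType]
    refine Multiset.lcm_dvd.2 fun k hk => (Multiset.dvd_prod hk).trans ?_
    exact Multiset.prod_dvd_prod_of_le (Multiset.le_add_right _ _)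
  exact Nat.le_of_dvd (Multiset.prod_pos fun _ => σ.partition.parts_pos) hdvd

/-- Landau's bound: for `n ≥ 1`, the order of any permutation in `Σ_n`
is strictly less than `e^(n/e)`. -/
theorem orderOf_perm_lt_exp_div_exp (n : ℕ) (hn : 1 ≤ n) (σ : Equiv.Perm (Fin n)) :
    (orderOf σ : ℝ) < Real.exp ((n : ℝ) / Real.exp 1) := by
  have hsum : σ.partition.parts.sum = n := by rw [σ.partition.parts_sum, Fintype.card_fin]
  have hne : σ.partition.parts ≠ 0 := by
    rintro h
    rw [h, Multiset.sum_zero] at hsum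
    omega
  calc (orderOf σ : ℝ) ≤ σ.partition.parts.prod := by
        exact_mod_cast σ.orderOf_le_prod_parts_partition
    _ < exp (σ.partition.parts.sum / exp 1) := Multiset.natCast_prod_lt_exp_sum_div_exp_one hne
    _ = exp (n / exp 1) := by rw [hsum]
end

section
/- Let g(ن) denote the largest order of an element of the symmetric group Σ_n (the Landau function), i.e., g(n) = max over σ in Σ_n of orderOf σ. Then the sequence n!/g(n) diverges to +∞; that is, the function n ↦ (n! : ℝ) / g(n) tends to infinity along the filter atTop. -/
/-! Each cycle length `k` of a permutation of `n` points satisfies `k < 2 ^ k`, so its order, the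
lcm of the cycle lengths, is at most their product and hence at most `2 ^ n`. Since `n!` outgrows
every exponential, `n! / g(n) ≥ n! / 2 ^ n → ∞`. -/

open Filter

theorem Multiset.prod_le_two_pow_sum (s : Multiset ℕ) : s.prod ≤ 2 ^ s.sum := by
  induction s using Multiset.induction with
  | empty => simp
  | cons a s ih =>
    rw [Multiset.prod_cons, Multiset.sum_cons, pow_add]
    exact Nat.mul_le_mul a.lt_two_pow_self.le ih

theorem Equiv.Perm.orderOf_le_two_pow_card {α : Type*} [Fintype α] [DecidableEq α]
    (σ : Equiv.Perm α) : orderOf σ ≤ 2 ^ Fintype.card α := by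
  have hprod_pos : 0 < σ.cycleType.prod :=
    Multiset.prod_pos fun k hk => (σ.two_le_of_mem_cycleType hk).trans_lt' two_pos
  have hlcm_dvd_prod : σ.cycleType.lcm ∣ σ.cycleType.prod :=
    Multiset.lcm_dvd.2 fun k hk => Multiset.dvd_prod hk
  calc orderOf σ = σ.cycleType.lcm := σ.lcm_cycleType.symm
    _ ≤ σ.cycleType.prod := Nat.le_of_dvd hprod_pos hlcm_dvd_prod
    _ ≤ 2 ^ σ.cycleType.sum := σ.cycleType.prod_le_two_pow_sum
    _ ≤ 2 ^ Fintype.card α := Nat.pow_le_pow_right two_pos σ.sum_cycleType_le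

theorem tendsto_factorial_div_pow_atTop {c : ℝ} (hc : 0 < c) :
    Tendsto (fun n : ℕ => (n.factorial : ℝ) / c ^ n) atTop atTop := by
  have hpos : Tendsto (fun n : ℕ => c ^ n / n.factorial) atTop (nhdsWithin 0 (Set.Ioi 0)) :=
    tendsto_nhdsWithin_of_tendsto_nhds_of_eventually_within _
      (FloorSemiring.tendsto_pow_div_factorial_atTop c) (Eventually.of_forall fun n => by
        simp only [Set.mem_Ioi]; positivity)
  simpa only [Pi.inv_def, inv_div] using hpos.inv_tendsto_nhdsGT_zero

theorem one_le_sup_orderOf_perm (α : Type*) [Fintype α] [DecidableEq α] :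
    1 ≤ Finset.univ.sup fun σ : Equiv.Perm α => orderOf σ := by
  simpa only [orderOf_one] using
    Finset.le_sup (f := fun σ : Equiv.Perm α => orderOf σ) (Finset.mem_univ 1)

/-- If `g n` denotes the Landau function (the largest order of an element of the
symmetric group `Σ_n`), then `n! / g n → +∞` as `n → ∞`. -/
theorem factorial_div_landau_tendsto_atTop :
    Tendsto
      (fun n : ℕ =>
        (n.factorial : ℝ) /
          ((Finset.univ.sup fun σ : Equiv.Perm (Fin n) => orderOf σ : ℕ) : ℝ))
      atTop atTop := by
  refine tendsto_atTop_mono (fun n => ?_) (tendsto_factorial_div_pow_atTop two_pos)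
  have hlandau_le : (Finset.univ.sup fun σ : Equiv.Perm (Fin n) => orderOf σ) ≤ 2 ^ n := by
    simpa only [Fintype.card_fin] using
      Finset.sup_le fun σ _ => Equiv.Perm.orderOf_le_two_pow_card (α := Fin n) σ
  have hlandau_pos : (0 : ℝ) < (Finset.univ.sup fun σ : Equiv.Perm (Fin n) => orderOf σ : ℕ) :=
    Nat.cast_pos.2 (one_le_sup_orderOf_perm (Fin n))
  exact div_le_div_of_nonneg_left (by positivity) hlandau_pos (mod_cast hlandau_le)
end

section
/- Let n ≥ 2 and let σ be an element of the alternating group A_n. Then the following are equivalent: (i) there exists an element τ of A_n that is conjugate to σ in Σ_n but not conjugate to σ by any element of A_n (i.e., the Σ_n-conjugacy class of σ splits in A_n); (ii) the cycle lengths of σ, counting fixed points as cycles of length 1, are pairwise distinct and all odd; equivalently, the cycle type of σ (the multiset of lengths ≥ 2 of its nontrivial cycles) has no repeated entries, every entry is odd, and σ has at most one fixed point. -/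
/-!
If `H` has index two in `G` and `σ ∈ H`, the `G`-class of `σ` is a single `H`-class exactly when
`G = H · C_G(σ)`, i.e. when the centralizer `C_G(σ)` contains an element outside `H`. So the class
of `σ` splits in `A_n` iff every permutation commuting with `σ` is even, and Mathlib's
`Equiv.Perm.centralizer_le_alternating_iff` reads that condition off the cycle type.
-/

open Equiv Equiv.Perm Finset

theorem Subgroup.exists_conj_not_conj_iff_centralizer_le_of_index_eq_two {G : Type*} [Group G]
    {H : Subgroup G} (hH : H.index = 2) {σ : G} (hσ : σ ∈ H) :
    (∃ τ ∈ H, IsConj σ τ ∧ ¬ ∃ π ∈ H, π * σ * π⁻¹ = τ) ↔ Subgroup.centralizer {σ} ≤ H := by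
  constructor
  · rintro ⟨τ, -, hστ, hsplit⟩ c hc
    obtain ⟨g, rfl⟩ := isConj_iff.mp hστ
    by_contra hcH
    have hgc : (g * c) * σ * (g * c)⁻¹ = g * σ * g⁻¹ := calc
      _ = g * (c * σ) * c⁻¹ * g⁻¹ := by group
      _ = g * σ * g⁻¹ := by rw [Subgroup.mem_centralizer_singleton_iff.mp hc]; group
    by_cases hg : g ∈ H
    · exact hsplit ⟨g, hg, rfl⟩
    · exact hsplit ⟨g * c, (H.mul_mem_iff_of_index_two hH).mpr (iff_of_false hg hcH), hgc⟩
  · intro hC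
    obtain ⟨g, hg⟩ := SetLike.exists_not_mem_of_ne_top H fun hH' => by simp [hH'] at hH
    refine ⟨g * σ * g⁻¹, (H.normal_of_index_eq_two hH).conj_mem σ hσ g, isConj_iff.mpr ⟨g, rfl⟩,
      ?_⟩
    rintro ⟨π, hπ, hπσ⟩
    have hcomm : g⁻¹ * π ∈ Subgroup.centralizer {σ} := by
      rw [Subgroup.mem_centralizer_singleton_iff]
      calc g⁻¹ * π * σ = g⁻¹ * (π * σ * π⁻¹) * π := by group
        _ = σ * (g⁻¹ * π) := by rw [hπσ]; group
    have := H.mul_mem hπ (H.inv_mem (hC hcomm))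
    exact hg (by simpa using this)

theorem Equiv.Perm.card_fixedPoints_le_one_iff {α : Type*} [Fintype α] [DecidableEq α]
    (σ : Perm α) :
    #{x | σ x = x} ≤ 1 ↔ Fintype.card α ≤ σ.cycleType.sum + 1 := by
  have hfix : ({x | σ x = x} : Finset α) = σ.supportᶜ := by ext; simp
  rw [hfix, card_compl, sum_cycleType]
  have := σ.support.card_le_univ
  omega

/-- For `n ≥ 2` and `σ ∈ A_n`, the `Σ_n`-conjugacy class of `σ` splits in `A_n`
(i.e. some `τ ∈ A_n` is conjugate to `σ` in `Σ_n` but not by an element of `A_n`)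
if and only if the cycle lengths of `σ` (counting fixed points as cycles of
length 1) are pairwise distinct and all odd, i.e. the cycle type of `σ` has no
repeated entries, every entry is odd, and `σ` has at most one fixed point. -/
theorem conjugacy_class_splits_iff (n : ℕ) (hn : 2 ≤ n) (σ : Equiv.Perm (Fin n))
    (hσ : σ ∈ alternatingGroup (Fin n)) :
    (∃ τ ∈ alternatingGroup (Fin n), IsConj σ τ ∧
        ¬ ∃ π ∈ alternatingGroup (Fin n), π * σ * π⁻¹ = τ) ↔
      (σ.cycleType.Nodup ∧ (∀ k ∈ σ.cycleType, Odd k) ∧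
        (Finset.univ.filter fun x => σ x = x).card ≤ 1) := by
  have : Nontrivial (Fin n) := Fin.nontrivial_iff_two_le.mpr hn
  rw [Subgroup.exists_conj_not_conj_iff_centralizer_le_of_index_eq_two
      alternatingGroup.index_eq_two hσ, centralizer_le_alternating_iff,
    Multiset.nodup_iff_count_le_one, card_fixedPoints_le_one_iff]
  tauto
end

section
/- Let n ≥ 2 and let σ be an element of the alternating group A_n whose cycle lengths, counting fixed points as cycles of length 1, are pairwise distinct and all odd. Then the Σ_n-conjugacy class of σ splits in A_n into two classes of equal size: the set of elements of the form π σ π^{-1} with π in A_n has cardinality exactly half the cardinality of the set of elements of the form π σ π^{-1} with π in Σ_n. -/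
/-!
The stabilizer of `σ` under conjugation by `Σ_n` is its centralizer `C(σ)`. A permutation commuting
with `σ` permutes its cycles preserving lengths, so (lengths being distinct) maps each cycle to
itself and acts on it as a power of that cycle, which is even as the length is odd; it also fixes
the at most one fixed point. Hence `C(σ) ≤ A_n`, and the `A_n`-orbit of `σ` has
`[A_n : C(σ)] = [Σ_n : C(σ)] / 2` elements.
-/

open MulAction

theorem MulAction.index_mul_ncard_orbit_subgroup {G X : Type*} [Group G] [MulAction G X]
    {S : Subgroup G} {x : X} (h : stabilizer G x ≤ S) :
    S.index * (orbit S x).ncard = (orbit G x).ncard := by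
  have hstab : (stabilizer G x).subgroupOf S = stabilizer S x := rfl
  rw [← index_stabilizer, ← index_stabilizer, ← hstab, ← Subgroup.relIndex, mul_comm,
    Subgroup.relIndex_mul_index h]

theorem ConjAct.orbit_eq_setOf_conj {G : Type*} [Group G] (g : G) :
    orbit (ConjAct G) g = {x | ∃ k : G, k * g * k⁻¹ = x} := by
  ext x
  rw [Set.mem_ofPred_eq, ← isConj_iff, ConjAct.mem_orbit_conjAct, isConj_comm]

theorem Subgroup.index_mul_ncard_conj_orbit {G : Type*} [Group G] {H : Subgroup G} {g : G}
    (h : centralizer {g} ≤ H) :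
    H.index * {x | ∃ k ∈ H, k * g * k⁻¹ = x}.ncard = {x | ∃ k : G, k * g * k⁻¹ = x}.ncard := by
  let S := H.comap (ConjAct.ofConjAct : ConjAct G ≃* G).toMonoidHom
  have hindex : S.index = H.index := H.index_comap_of_surjective ConjAct.ofConjAct.surjective
  have hstab : stabilizer (ConjAct G) g ≤ S := fun k hk ↦
    h ((centralizer_eq_comap_stabilizer g).symm ▸ hk)
  have horbit : orbit S g = {x | ∃ k ∈ H, k * g * k⁻¹ = x} := by
    ext x
    constructor
    · rintro ⟨⟨k, hk⟩, rfl⟩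
      exact ⟨_, hk, (ConjAct.smul_def k g).symm⟩
    · rintro ⟨k, hk, rfl⟩
      exact ⟨⟨ConjAct.toConjAct k, hk⟩, ConjAct.toConjAct_smul k g⟩
  rw [← hindex, ← horbit, ← ConjAct.orbit_eq_setOf_conj, index_mul_ncard_orbit_subgroup hstab]

theorem Equiv.Perm.centralizer_le_alternatingGroup_of_cycleType {α : Type*} [Fintype α]
    [DecidableEq α] {σ : Perm α} (hnodup : σ.cycleType.Nodup) (hodd : ∀ k ∈ σ.cycleType, Odd k)
    (hfix : (Finset.univ.filter fun x => σ x = x).card ≤ 1) :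
    Subgroup.centralizer {σ} ≤ alternatingGroup α := by
  have hfixedPoints : (Finset.univ.filter fun x => σ x = x) = σ.supportᶜ := by
    ext x
    simp
  rw [hfixedPoints, Finset.card_compl] at hfix
  refine centralizer_le_alternating_iff.mpr ⟨hodd, ?_, Multiset.nodup_iff_count_le_one.mp hnodup⟩
  rw [sum_cycleType]
  omega

theorem conjugacy_class_splits_into_halves_general (n : ℕ) (hn : 2 ≤ n)
    (σ : Equiv.Perm (Fin n))
    (hnodup : σ.cycleType.Nodup) (hodd : ∀ k ∈ σ.cycleType, Odd k)
    (hfix : (Finset.univ.filter fun x => σ x = x).card ≤ 1) :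
    2 * Set.ncard {τ : Equiv.Perm (Fin n) |
        ∃ π ∈ alternatingGroup (Fin n), π * σ * π⁻¹ = τ} =
      Set.ncard {τ : Equiv.Perm (Fin n) |
        ∃ π : Equiv.Perm (Fin n), π * σ * π⁻¹ = τ} := by
  have : Nontrivial (Fin n) := Fin.nontrivial_iff_two_le.mpr hn
  rw [← alternatingGroup.index_eq_two (α := Fin n)]
  exact Subgroup.index_mul_ncard_conj_orbit
    (Equiv.Perm.centralizer_le_alternatingGroup_of_cycleType hnodup hodd hfix)

/-- For `n ≥ 2`, if `σ ∈ A_n` has pairwise distinct, all-odd cycle lengths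
(counting fixed points as cycles of length 1), then the `Σ_n`-conjugacy class of
`σ` splits in `A_n` into two classes of equal size: the `A_n`-conjugacy class of
`σ` has exactly half the cardinality of its `Σ_n`-conjugacy class. -/
theorem conjugacy_class_splits_into_halves (n : ℕ) (hn : 2 ≤ n)
    (σ : Equiv.Perm (Fin n)) (hσ : σ ∈ alternatingGroup (Fin n))
    (hnodup : σ.cycleType.Nodup) (hodd : ∀ k ∈ σ.cycleType, Odd k)
    (hfix : (Finset.univ.filter fun x => σ x = x).card ≤ 1) :
    2 * Set.ncard {τ : Equiv.Perm (Fin n) |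
        ∃ π ∈ alternatingGroup (Fin n), π * σ * π⁻¹ = τ} =
      Set.ncard {τ : Equiv.Perm (Fin n) |
        ∃ π : Equiv.Perm (Fin n), π * σ * π⁻¹ = τ} :=
  conjugacy_class_splits_into_halves_general n hn σ hnodup hodd hfix
end
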